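/- Define 4×4 matrices ρ = (1/2)diag(1,1,0,0), σ₀ = (1/2)diag(1,0,1,0), and σ₁ = (1/2)(|η₁⟩⟨η₁| + |η₂⟩⟨η₂|) where |η₁⟩ = (e₁ + e₃)/√2 and |η₂⟩ = (e₂ + e₄)/√2. Then ρ, σ₀, σ₁ are density matrices, ρσ₀ = σ₀ρ, ρσ₁ ≠ σ₁ρ, and the pairs (ρ,σ₀) and (ρ,σ₁) have equal values of Tr(ρ²), Tr(σ²), Tr(ρσ), Tr(ρ³), Tr(σ³), Tr(ρ²σ), Tr(ρσ²) — namely (1/2, 1/2, 1/4, 1/4, 1/4, 1/8, 1/8). -/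

import Mathlib

open Matrix ComplexOrder

noncomputable def rho4 : Matrix (Fin 4) (Fin 4) ℂ :=
  (1 / 2 : ℂ) • Matrix.diagonal ![1, 1, 0, 0]

noncomputable def sigma0 : Matrix (Fin 4) (Fin 4) ℂ :=
  (1 / 2 : ℂ) • Matrix.diagonal ![1, 0, 1, 0]

noncomputable def eta1 : Fin 4 → ℂ :=
  ![(Real.sqrt 2 : ℂ)⁻¹, 0, (Real.sqrt 2 : ℂ)⁻¹, 0]

noncomputable def eta2 : Fin 4 → ℂ :=
  ![0, (Real.sqrt 2 : ℂ)⁻¹, 0, (Real.sqrt 2 : ℂ)⁻¹]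

noncomputable def sigma1 : Matrix (Fin 4) (Fin 4) ℂ :=
  (1 / 2 : ℂ) • (vecMulVec eta1 (star eta1) + vecMulVec eta2 (star eta2))

/-!
Each of ρ, σ₀, σ₁ is `(1/2) • P` for an orthogonal projection `P` of trace 2: a diagonal 0/1
matrix for ρ and σ₀, the sum of the rank-one projections onto the orthonormal vectors η₁, η₂
for σ₁. Hence each is positive semidefinite with trace 1 and satisfies `X² = X/2`, which reduces
every trace of a word of length 2 or 3 to `Tr X = 1` or `Tr(ρσ) = 1/4`. The commutator
is read off one entry, `(ρσ₁)₀₂ = 1/8` while `(σ₁ρ)₀₂ = 0`.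
-/

open scoped MatrixOrder

section SquareEqSmul

variable {n R : Type*} [Fintype n] [DecidableEq n] [CommRing R] {X Y : Matrix n n R} {c : R}

lemma trace_sq_of_sq_eq_smul (hX : X ^ 2 = c • X) : trace (X ^ 2) = c * trace X := by
  rw [hX, trace_smul, smul_eq_mul]

lemma trace_pow_three_of_sq_eq_smul (hX : X ^ 2 = c • X) : trace (X ^ 3) = c ^ 2 * trace X := by
  rw [pow_succ, hX, smul_mul_assoc, ← sq, hX, smul_smul, trace_smul, smul_eq_mul, sq]

lemma trace_sq_mul_of_sq_eq_smul (hX : X ^ 2 = c • X) :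
    trace (X ^ 2 * Y) = c * trace (X * Y) := by
  rw [hX, smul_mul_assoc, trace_smul, smul_eq_mul]

lemma trace_mul_sq_of_sq_eq_smul (hY : Y ^ 2 = c • Y) :
    trace (X * Y ^ 2) = c * trace (X * Y) := by
  rw [hY, mul_smul_comm, trace_smul, smul_eq_mul]

end SquareEqSmul

lemma IsIdempotentElem.smul_sq {R A : Type*} [CommSemiring R] [Semiring A] [Algebra R A] {p : A}
    (hp : IsIdempotentElem p) (c : R) : (c • p) ^ 2 = c • (c • p) := by
  rw [smul_pow, hp.pow_eq two_ne_zero, sq, smul_smul]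

section StarProjection

variable {n 𝕜 : Type*} [Fintype n] [RCLike 𝕜]

lemma IsStarProjection.posSemidef {P : Matrix n n 𝕜} (hP : IsStarProjection P) : P.PosSemidef :=
  hP.nonneg.posSemidef

lemma isStarProjection_diagonal [DecidableEq n] {d : n → 𝕜} (hd : ∀ i, IsStarProjection (d i)) :
    IsStarProjection (diagonal d) where
  isIdempotentElem := by
    rw [IsIdempotentElem, diagonal_mul_diagonal]
    exact congrArg diagonal (funext fun i ↦ (hd i).isIdempotentElem.eq)
  isSelfAdjoint := by
    rw [IsSelfAdjoint, star_eq_conjTranspose, diagonal_conjTranspose]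
    exact congrArg diagonal (funext fun i ↦ (hd i).isSelfAdjoint.star_eq)

variable {u v : n → 𝕜}

lemma isStarProjection_vecMulVec_star (hu : star u ⬝ᵥ u = 1) :
    IsStarProjection (vecMulVec u (star u)) where
  isIdempotentElem := by rw [IsIdempotentElem, vecMulVec_mul_vecMulVec, hu, one_smul]
  isSelfAdjoint := by rw [IsSelfAdjoint, star_eq_conjTranspose, conjTranspose_vecMulVec, star_star]

lemma vecMulVec_star_mul_vecMulVec_star_of_orthogonal (huv : star u ⬝ᵥ v = 0) :
    vecMulVec u (star u) * vecMulVec v (star v) = 0 := by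
  rw [vecMulVec_mul_vecMulVec, huv, zero_smul, vecMulVec_zero]

end StarProjection

lemma inv_sqrt_two_mul_self : ((Real.sqrt 2 : ℂ))⁻¹ * (Real.sqrt 2 : ℂ)⁻¹ = 1 / 2 := by
  rw [← mul_inv, ← Complex.ofReal_mul, Real.mul_self_sqrt zero_le_two]
  norm_num

lemma star_eta1_dotProduct_eta1 : star eta1 ⬝ᵥ eta1 = 1 := by
  simp [eta1, dotProduct, Fin.sum_univ_four, inv_sqrt_two_mul_self]
  norm_num

lemma star_eta2_dotProduct_eta2 : star eta2 ⬝ᵥ eta2 = 1 := by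
  simp [eta2, dotProduct, Fin.sum_univ_four, inv_sqrt_two_mul_self]
  norm_num

lemma star_eta1_dotProduct_eta2 : star eta1 ⬝ᵥ eta2 = 0 := by
  simp [eta1, eta2, dotProduct, Fin.sum_univ_four]

lemma isStarProjection_diagonal_1100 : IsStarProjection (diagonal ![(1 : ℂ), 1, 0, 0]) :=
  isStarProjection_diagonal (by simp [Fin.forall_fin_succ])

lemma isStarProjection_diagonal_1010 : IsStarProjection (diagonal ![(1 : ℂ), 0, 1, 0]) :=
  isStarProjection_diagonal (by simp [Fin.forall_fin_succ])

lemma isStarProjection_eta1_add_eta2 :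
    IsStarProjection (vecMulVec eta1 (star eta1) + vecMulVec eta2 (star eta2)) :=
  (isStarProjection_vecMulVec_star star_eta1_dotProduct_eta1).add
    (isStarProjection_vecMulVec_star star_eta2_dotProduct_eta2)
    (vecMulVec_star_mul_vecMulVec_star_of_orthogonal star_eta1_dotProduct_eta2)

lemma rho4_sq : rho4 ^ 2 = (1 / 2 : ℂ) • rho4 :=
  isStarProjection_diagonal_1100.isIdempotentElem.smul_sq _

lemma sigma0_sq : sigma0 ^ 2 = (1 / 2 : ℂ) • sigma0 :=
  isStarProjection_diagonal_1010.isIdempotentElem.smul_sq _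

lemma sigma1_sq : sigma1 ^ 2 = (1 / 2 : ℂ) • sigma1 :=
  isStarProjection_eta1_add_eta2.isIdempotentElem.smul_sq _

lemma trace_rho4 : trace rho4 = 1 := by
  simp [rho4, trace_diagonal, Fin.sum_univ_four]
  norm_num

lemma trace_sigma0 : trace sigma0 = 1 := by
  simp [sigma0, trace_diagonal, Fin.sum_univ_four]
  norm_num

lemma trace_sigma1 : trace sigma1 = 1 := by
  rw [sigma1, trace_smul, trace_add, trace_vecMulVec, trace_vecMulVec, dotProduct_comm,
    star_eta1_dotProduct_eta1, dotProduct_comm, star_eta2_dotProduct_eta2]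
  norm_num

lemma trace_rho4_mul_sigma0 : trace (rho4 * sigma0) = 1 / 4 := by
  simp [rho4, sigma0, trace_diagonal, Fin.sum_univ_four]
  norm_num

lemma commute_rho4_sigma0 : Commute rho4 sigma0 :=
  ((commute_diagonal _ _).smul_left _).smul_right _

lemma sigma1_eq : sigma1 = (1 / 4 : ℂ) • !![1, 0, 1, 0; 0, 1, 0, 1; 1, 0, 1, 0; 0, 1, 0, 1] := by
  ext i j
  fin_cases i <;> fin_cases j <;>
    simp [sigma1, eta1, eta2, vecMulVec_apply, inv_sqrt_two_mul_self, -cons_vecMulVec,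
      -vecMulVec_cons] <;> norm_num

lemma trace_rho4_mul_sigma1 : trace (rho4 * sigma1) = 1 / 4 := by
  simp [rho4, sigma1_eq, trace, Fin.sum_univ_four]
  norm_num

lemma rho4_mul_sigma1_ne : rho4 * sigma1 ≠ sigma1 * rho4 := by
  intro h
  simpa [rho4, sigma1_eq, vecMul_diagonal] using congrFun (congrFun h 0) 2

theorem stmt16 :
    (rho4.PosSemidef ∧ trace rho4 = 1) ∧
    (sigma0.PosSemidef ∧ trace sigma0 = 1) ∧
    (sigma1.PosSemidef ∧ trace sigma1 = 1) ∧
    rho4 * sigma0 = sigma0 * rho4 ∧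
    rho4 * sigma1 ≠ sigma1 * rho4 ∧
    trace (rho4 ^ 2) = 1 / 2 ∧
    trace (sigma0 ^ 2) = 1 / 2 ∧ trace (sigma1 ^ 2) = 1 / 2 ∧
    trace (rho4 * sigma0) = 1 / 4 ∧ trace (rho4 * sigma1) = 1 / 4 ∧
    trace (rho4 ^ 3) = 1 / 4 ∧
    trace (sigma0 ^ 3) = 1 / 4 ∧ trace (sigma1 ^ 3) = 1 / 4 ∧
    trace (rho4 ^ 2 * sigma0) = 1 / 8 ∧ trace (rho4 ^ 2 * sigma1) = 1 / 8 ∧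
    trace (rho4 * sigma0 ^ 2) = 1 / 8 ∧ trace (rho4 * sigma1 ^ 2) = 1 / 8 := by
  have hhalf : (0 : ℂ) ≤ 1 / 2 := by positivity
  refine ⟨⟨isStarProjection_diagonal_1100.posSemidef.smul hhalf, trace_rho4⟩,
    ⟨isStarProjection_diagonal_1010.posSemidef.smul hhalf, trace_sigma0⟩,
    ⟨isStarProjection_eta1_add_eta2.posSemidef.smul hhalf, trace_sigma1⟩,
    commute_rho4_sigma0.eq, rho4_mul_sigma1_ne, ?_⟩
  rw [trace_sq_of_sq_eq_smul rho4_sq, trace_sq_of_sq_eq_smul sigma0_sq,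
    trace_sq_of_sq_eq_smul sigma1_sq, trace_pow_three_of_sq_eq_smul rho4_sq,
    trace_pow_three_of_sq_eq_smul sigma0_sq, trace_pow_three_of_sq_eq_smul sigma1_sq,
    trace_sq_mul_of_sq_eq_smul rho4_sq, trace_sq_mul_of_sq_eq_smul rho4_sq,
    trace_mul_sq_of_sq_eq_smul sigma0_sq, trace_mul_sq_of_sq_eq_smul sigma1_sq,
    trace_rho4, trace_sigma0, trace_sigma1, trace_rho4_mul_sigma0, trace_rho4_mul_sigma1]
  norm_num
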